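/- (Proposition 2, part (b)) Let M ≥ 1 and let b ∈ ℂ^M have |b_k| = 1 for all k. Then there exists x ∈ X with |Σ_{k=1}^{M} conj(b_k)·x_k| ≥ (2√2/π)·M; equivalently, the maximum magnitude s_max of the equivalent transmitted symbol s(x) = (1/√M)·Σ_k conj(b_k)·x_k over x ∈ X satisfies |s_max| ≥ 2√(2M)/π. -/

import Mathlib

/-!
Multiplying by a common phase `e^{iφ}` does not change `|Σ_k c_k x_k|`, and for `w = e^{iφ} c_k`
the best one-bit symbol achieves `Re (w x) = (|Re w| + |Im w|) / √2`. Since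
`w = |c_k| e^{i(φ + arg c_k)}` and `|cos| + |sin|` has period `π/2` and integral `2` over a period,
the mean over `φ ∈ [0, π/2]` of `Σ_k (|Re w_k| + |Im w_k|)` is `(4/π) Σ_k |c_k|`; a phase where
this sum is at least its mean gives `|Σ_k c_k x_k| ≥ (2√2/π) Σ_k |c_k|`.
-/

/-- The one-bit alphabet `X = {x : x_k ∈ {(±1 ± i)/√2} for all k}`. -/
noncomputable def oneBit (M : ℕ) : Set (Fin M → ℂ) :=
  {x | ∀ k, x k ∈ ({(1 + Complex.I) / Real.sqrt 2, (1 - Complex.I) / Real.sqrt 2,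
    (-1 + Complex.I) / Real.sqrt 2, (-1 - Complex.I) / Real.sqrt 2} : Set ℂ)}

open Real MeasureTheory

def l1Norm (w : ℂ) : ℝ := |w.re| + |w.im|

theorem exists_intervalIntegral_div_le {f : ℝ → ℝ} {a b : ℝ} (hab : a ≠ b)
    (hf : IntervalIntegrable f volume a b) : ∃ t, (∫ x in a..b, f x) / (b - a) ≤ f t := by
  rw [← interval_average_eq_div]
  have : IsFiniteMeasure (volume.restrict (Set.uIoc a b)) := by
    rw [Set.uIoc]; infer_instance
  refine exists_average_le ?_ (intervalIntegrable_iff.mp hf)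
  rw [Ne, Measure.restrict_eq_zero, Set.uIoc, Real.volume_Ioc, ENNReal.ofReal_eq_zero, not_le,
    sub_pos, min_lt_max]
  exact hab

theorem periodic_abs_cos_add_abs_sin : Function.Periodic (fun t => |cos t| + |sin t|) (π / 2) := by
  intro t
  simp [cos_add_pi_div_two, sin_add_pi_div_two, add_comm]

theorem integral_abs_cos_add_abs_sin (ψ : ℝ) :
    ∫ t in (0 : ℝ)..π / 2, (|cos (t + ψ)| + |sin (t + ψ)|) = 2 := by
  have hcos_sin : ∀ t ∈ Set.uIcc 0 (π / 2), |cos t| + |sin t| = cos t + sin t := by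
    intro t ht
    rw [Set.uIcc_of_le (by positivity)] at ht
    rw [abs_of_nonneg (cos_nonneg_of_mem_Icc ⟨by linarith [ht.1, pi_pos], ht.2⟩),
      abs_of_nonneg (sin_nonneg_of_nonneg_of_le_pi ht.1 (by linarith [pi_pos, ht.2]))]
  rw [intervalIntegral.integral_comp_add_right (fun t => |cos t| + |sin t|), zero_add,
    add_comm, periodic_abs_cos_add_abs_sin.intervalIntegral_add_eq ψ 0, zero_add,
    intervalIntegral.integral_congr hcos_sin, intervalIntegral.integral_add
    (continuous_cos.intervalIntegrable _ _) (continuous_sin.intervalIntegrable _ _), integral_cos,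
    integral_sin]
  norm_num

theorem Complex.exp_mul_I_mul_eq_norm_mul_exp (φ : ℝ) (c : ℂ) :
    exp (φ * I) * c = ‖c‖ * exp ((φ + arg c : ℝ) * I) := by
  conv_lhs => rw [← norm_mul_exp_arg_mul_I c]
  push_cast
  rw [add_mul, Complex.exp_add]
  ring

theorem integral_l1Norm_exp_mul_I_mul (c : ℂ) :
    ∫ φ in (0 : ℝ)..π / 2, l1Norm (Complex.exp (φ * Complex.I) * c) = 2 * ‖c‖ := by
  simp only [l1Norm, Complex.exp_mul_I_mul_eq_norm_mul_exp, Complex.re_ofReal_mul,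
    Complex.im_ofReal_mul, Complex.exp_ofReal_mul_I_re, Complex.exp_ofReal_mul_I_im, abs_mul,
    abs_norm, ← mul_add]
  rw [intervalIntegral.integral_const_mul, integral_abs_cos_add_abs_sin, mul_comm]

-- The alphabet of `oneBit`, so that `x ∈ oneBit M` is definitionally `∀ k, x k ∈ oneBitSymbols`.
noncomputable def oneBitSymbols : Set ℂ :=
  {(1 + Complex.I) / Real.sqrt 2, (1 - Complex.I) / Real.sqrt 2,
    (-1 + Complex.I) / Real.sqrt 2, (-1 - Complex.I) / Real.sqrt 2}

theorem exists_mem_oneBitSymbols_re_mul_eq (w : ℂ) :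
    ∃ x ∈ oneBitSymbols, (w * x).re = l1Norm w / √2 := by
  have re_mul : ∀ z : ℂ, (w * (z / √2)).re = (w.re * z.re - w.im * z.im) / √2 := fun z => by
    rw [← mul_div_assoc, Complex.div_ofReal_re, Complex.mul_re]
  rcases le_or_gt 0 w.re with hre | hre <;> rcases le_or_gt 0 w.im with him | him
  · refine ⟨(1 - Complex.I) / √2, by simp [oneBitSymbols], ?_⟩
    rw [l1Norm, re_mul, abs_of_nonneg hre, abs_of_nonneg him]
    norm_num [sub_eq_add_neg]
  · refine ⟨(1 + Complex.I) / √2, by simp [oneBitSymbols], ?_⟩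
    rw [l1Norm, re_mul, abs_of_nonneg hre, abs_of_neg him]
    norm_num [sub_eq_add_neg]
  · refine ⟨(-1 - Complex.I) / √2, by simp [oneBitSymbols], ?_⟩
    rw [l1Norm, re_mul, abs_of_neg hre, abs_of_nonneg him]
    norm_num [sub_eq_add_neg]
  · refine ⟨(-1 + Complex.I) / √2, by simp [oneBitSymbols], ?_⟩
    rw [l1Norm, re_mul, abs_of_neg hre, abs_of_neg him]
    norm_num [sub_eq_add_neg]

theorem exists_phase_four_div_pi_mul_sum_norm_le {ι : Type*} [Fintype ι] (c : ι → ℂ) :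
    ∃ φ : ℝ, 4 / π * ∑ k, ‖c k‖ ≤ ∑ k, l1Norm (Complex.exp (φ * Complex.I) * c k) := by
  have hcont : ∀ k, Continuous fun φ : ℝ => l1Norm (Complex.exp (φ * Complex.I) * c k) :=
    fun k => by simp only [l1Norm]; fun_prop
  have hint : IntervalIntegrable (fun φ : ℝ => ∑ k, l1Norm (Complex.exp (φ * Complex.I) * c k))
      volume 0 (π / 2) :=
    (continuous_finsetSum _ fun k _ => hcont k).intervalIntegrable _ _
  obtain ⟨φ, hφ⟩ := exists_intervalIntegral_div_le (by positivity) hint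
  refine ⟨φ, le_of_eq_of_le ?_ hφ⟩
  rw [intervalIntegral.integral_finsetSum fun k _ => (hcont k).intervalIntegrable _ _]
  simp only [integral_l1Norm_exp_mul_I_mul, ← Finset.mul_sum]
  field_simp
  ring

theorem exists_oneBitSymbols_sum_norm_le_norm_sum_mul {ι : Type*} [Fintype ι] (c : ι → ℂ) :
    ∃ x : ι → ℂ, (∀ k, x k ∈ oneBitSymbols) ∧ 2 * √2 / π * ∑ k, ‖c k‖ ≤ ‖∑ k, c k * x k‖ := by
  obtain ⟨φ, hφ⟩ := exists_phase_four_div_pi_mul_sum_norm_le c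
  choose x hx hx_re using fun k =>
    exists_mem_oneBitSymbols_re_mul_eq (Complex.exp (φ * Complex.I) * c k)
  refine ⟨x, hx, ?_⟩
  calc 2 * √2 / π * ∑ k, ‖c k‖ = 4 / π * (∑ k, ‖c k‖) / √2 := by
        field_simp
        rw [sq_sqrt zero_le_two]
        ring
    _ ≤ (∑ k, l1Norm (Complex.exp (φ * Complex.I) * c k)) / √2 := by gcongr
    _ = (Complex.exp (φ * Complex.I) * ∑ k, c k * x k).re := by
        simp only [Finset.mul_sum, Complex.re_sum, ← mul_assoc, hx_re, Finset.sum_div]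
    _ ≤ ‖Complex.exp (φ * Complex.I) * ∑ k, c k * x k‖ := Complex.re_le_norm _
    _ = ‖∑ k, c k * x k‖ := by rw [norm_mul, Complex.norm_exp_ofReal_mul_I, one_mul]

theorem exists_one_bit_beamforming_gain_general (M : ℕ) (b : Fin M → ℂ)
    (hb : ∀ k, ‖b k‖ = 1) :
    ∃ x ∈ oneBit M, ‖∑ k, (starRingEnd ℂ) (b k) * x k‖
      ≥ 2 * Real.sqrt 2 / Real.pi * M ∧
      ‖((1 / Real.sqrt M : ℝ) : ℂ) * ∑ k, (starRingEnd ℂ) (b k) * x k‖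
        ≥ 2 * Real.sqrt (2 * M) / Real.pi := by
  obtain ⟨x, hx, hgain⟩ :=
    exists_oneBitSymbols_sum_norm_le_norm_sum_mul fun k => (starRingEnd ℂ) (b k)
  simp only [Complex.norm_conj, hb, Finset.sum_const, Finset.card_univ, Fintype.card_fin,
    nsmul_eq_mul, mul_one] at hgain
  refine ⟨x, hx, hgain, ?_⟩
  rw [norm_mul, Complex.norm_real, norm_of_nonneg (by positivity), ge_iff_le]
  calc 2 * √(2 * M) / π = 2 * √2 / π * (M / √M) := by rw [div_sqrt, sqrt_mul zero_le_two]; ring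
    _ = 1 / √M * (2 * √2 / π * M) := by ring
    _ ≤ _ := by gcongr

/-- **Proposition 2, part (b).** There is `x ∈ X` with
`|Σ_k conj(b_k)·x_k| ≥ (2√2/π)·M`, i.e. the maximal equivalent transmitted symbol
`s(x) = (1/√M)·Σ_k conj(b_k)·x_k` satisfies `|s_max| ≥ 2√(2M)/π`. -/
theorem exists_one_bit_beamforming_gain (M : ℕ) (hM : 1 ≤ M) (b : Fin M → ℂ)
    (hb : ∀ k, ‖b k‖ = 1) :
    ∃ x ∈ oneBit M, ‖∑ k, (starRingEnd ℂ) (b k) * x k‖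
      ≥ 2 * Real.sqrt 2 / Real.pi * M ∧
      ‖((1 / Real.sqrt M : ℝ) : ℂ) * ∑ k, (starRingEnd ℂ) (b k) * x k‖
        ≥ 2 * Real.sqrt (2 * M) / Real.pi :=
  exists_one_bit_beamforming_gain_general M b hb
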